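/- arXiv:2003.14224 — 2 statements merged into one kernel-verified Lean document; each statement's English description precedes it below -/
import Mathlib

section
/- Let φ be an endomorphism of a nonzero finite-dimensional complex normed vector space with spectral radius ρ(φ) > 0, and let s + 1 be the maximal size of the Jordan blocks of φ whose eigenvalue λ has |λ| = ρ(φ). Then ‖φⁿ‖/ρ(φ)ⁿ grows like nˢ: there exist constants 0 < c ≤ C and an integer N₀ such that c·nˢ ≤ ‖φⁿ‖/ρ(φ)ⁿ ≤ C·nˢ for all n ≥ N₀. -/
/-!
Split `V` into generalized eigenspaces. On the one for `μ`, with `g = φ - μ`, the binomial formula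
gives `φⁿ x = ∑_{j < k} C(n, j) μ^(n-j) gʲ x` when `gᵏ x = 0`, and `C(n, j) |μ|^(n-j) = Θ(nʲ |μ|ⁿ)`.
Every such term is `O(nˢ rⁿ)`: for `|μ| < r` the geometric factor wins, and for `|μ| = r` only
`j ≤ s` occurs. Testing the operator norm on a basis gives the upper bound. For the lower bound,
take `μ₀` on the spectral circle with a Jordan block of size `s + 1` and `v` with `g^(s+1) v = 0`,
`gˢ v ≠ 0`: the top term `C(n, s) μ₀^(n-s) gˢ v` is of exact order `nˢ rⁿ` and dominates the rest.
-/

open Filter Asymptotics Module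

section KerPowIndex

variable {K V : Type*} [Field K] [AddCommGroup V] [Module K V] [FiniteDimensional K V]

/-- For `g = f - μ • 1`, the size of the largest Jordan block of `f` for the eigenvalue `μ`
(`0` when `μ` is not an eigenvalue, since then the set is empty). -/
noncomputable def kerPowIndex (g : End K V) : ℕ :=
  sSup {k : ℕ | LinearMap.ker (g ^ k) ≠ LinearMap.ker (g ^ (k - 1))}

theorem le_finrank_of_ker_pow_ne {g : End K V} {k : ℕ}
    (hk : LinearMap.ker (g ^ k) ≠ LinearMap.ker (g ^ (k - 1))) : k ≤ finrank K V := by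
  by_contra! hlt
  apply hk
  rw [End.ker_pow_eq_ker_pow_finrank_of_le hlt.le,
    End.ker_pow_eq_ker_pow_finrank_of_le (Nat.le_sub_one_of_lt hlt)]

theorem bddAbove_setOf_ker_pow_ne (g : End K V) :
    BddAbove {k : ℕ | LinearMap.ker (g ^ k) ≠ LinearMap.ker (g ^ (k - 1))} :=
  ⟨finrank K V, fun _ => le_finrank_of_ker_pow_ne⟩

theorem kerPowIndex_le_finrank (g : End K V) : kerPowIndex g ≤ finrank K V :=
  csSup_le' fun _ => le_finrank_of_ker_pow_ne

omit [FiniteDimensional K V] in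
theorem ker_pow_le_ker_pow_of_le (g : End K V) {k m : ℕ} (hkm : k ≤ m) :
    LinearMap.ker (g ^ k) ≤ LinearMap.ker (g ^ m) := by
  rw [← Nat.sub_add_cancel hkm, pow_add]
  exact LinearMap.ker_le_ker_comp _ _

theorem ker_pow_le_ker_pow_kerPowIndex (g : End K V) (k : ℕ) :
    LinearMap.ker (g ^ k) ≤ LinearMap.ker (g ^ kerPowIndex g) := by
  rcases le_total k (kerPowIndex g) with hk | hk
  · exact ker_pow_le_ker_pow_of_le g hk
  induction k, hk using Nat.le_induction with
  | base => exact le_rfl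
  | succ k hk ih =>
    have hstable : LinearMap.ker (g ^ (k + 1)) = LinearMap.ker (g ^ k) := by
      simpa using notMem_of_csSup_lt (Nat.lt_add_one_of_le hk) (bddAbove_setOf_ker_pow_ne g)
    exact hstable ▸ ih

theorem ker_pow_kerPowIndex_ne {g : End K V} (hg : kerPowIndex g ≠ 0) :
    LinearMap.ker (g ^ kerPowIndex g) ≠ LinearMap.ker (g ^ (kerPowIndex g - 1)) :=
  Nat.sSup_mem (Set.nonempty_iff_ne_empty.mpr fun h => hg (by simp [kerPowIndex, h]))
    (bddAbove_setOf_ker_pow_ne g)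

end KerPowIndex

theorem hasEigenvalue_of_mem_ker_pow {K V : Type*} [Field K] [AddCommGroup V] [Module K V]
    {f : End K V} {μ : K} {k : ℕ} {x : V} (hx : x ∈ LinearMap.ker ((f - μ • 1) ^ k))
    (hx0 : x ≠ 0) : f.HasEigenvalue μ :=
  End.hasEigenvalue_of_hasGenEigenvalue (k := k) fun h =>
    hx0 <| (Submodule.mem_bot K).mp <| h ▸ End.mem_genEigenspace_nat.mpr hx

theorem pow_apply_eq_sum_of_mem_ker {R M : Type*} [CommRing R] [AddCommGroup M] [Module R M]
    (f : End R M) (μ : R) {k : ℕ} {x : M} (hx : x ∈ LinearMap.ker ((f - μ • 1) ^ k)) (n : ℕ) :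
    (f ^ n) x = ∑ j ∈ Finset.range k, ((n.choose j : R) * μ ^ (n - j)) • ((f - μ • 1) ^ j) x := by
  set g := f - μ • (1 : End R M)
  have hf : f = g + μ • 1 := by simp [g]
  have hcomm : Commute g (μ • 1) := (Commute.one_right g).smul_right μ
  calc (f ^ n) x
      = ∑ j ∈ Finset.range (n + 1), ((n.choose j : R) * μ ^ (n - j)) • (g ^ j) x := by
        rw [hf, hcomm.add_pow, LinearMap.sum_apply]
        refine Finset.sum_congr rfl fun j _ => ?_
        simp only [End.mul_apply, smul_pow, one_pow, LinearMap.smul_apply, End.one_apply,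
          End.natCast_apply, ← Nat.cast_smul_eq_nsmul R,
          smul_smul, map_smul, mul_comm]
    _ = ∑ j ∈ Finset.range (n + 1 + k), ((n.choose j : R) * μ ^ (n - j)) • (g ^ j) x := by
        refine Finset.sum_subset (Finset.range_subset_range.mpr (by omega)) fun j _ hj => ?_
        simp [Nat.choose_eq_zero_of_lt (by simpa using hj : n < j)]
    _ = ∑ j ∈ Finset.range k, ((n.choose j : R) * μ ^ (n - j)) • (g ^ j) x := by
        refine (Finset.sum_subset (Finset.range_subset_range.mpr (by omega)) fun j _ hj => ?_).symm
        have hj : k ≤ j := by simpa using hj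
        rw [← Nat.sub_add_cancel hj, pow_add, End.mul_apply, LinearMap.mem_ker.mp hx,
          map_zero, smul_zero]

theorem isBigO_natCast_pow_pow {j s : ℕ} (h : j ≤ s) :
    (fun n : ℕ => (n : ℝ) ^ j) =O[atTop] fun n => (n : ℝ) ^ s :=
  .of_bound 1 <| (eventually_ge_atTop 1).mono fun n hn => by
    simp only [Real.norm_eq_abs, abs_pow, Nat.abs_cast, one_mul]
    exact pow_le_pow_right₀ (by exact_mod_cast hn) h

theorem isLittleO_natCast_pow_pow {j s : ℕ} (h : j < s) :
    (fun n : ℕ => (n : ℝ) ^ j) =o[atTop] fun n => (n : ℝ) ^ s :=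
  (isLittleO_pow_pow_atTop_of_lt h).comp_tendsto tendsto_natCast_atTop_atTop

theorem isBigO_natCast_pow_mul_pow_of_lt {a b : ℝ} (hab : |a| < b) (j s : ℕ) :
    (fun n : ℕ => (n : ℝ) ^ j * a ^ n) =O[atTop] fun n => (n : ℝ) ^ s * b ^ n :=
  (isLittleO_pow_const_mul_const_pow_const_pow_of_norm_lt j hab).isBigO.trans <| by
    simpa using (isBigO_natCast_pow_pow (Nat.zero_le s)).mul (isBigO_refl (fun n => b ^ n) _)

section Choose

variable {𝕜 : Type*} [RCLike 𝕜]

theorem isTheta_choose_mul_pow_sub (j : ℕ) {μ : 𝕜} (hμ : μ ≠ 0) :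
    (fun n : ℕ => (n.choose j : 𝕜) * μ ^ (n - j)) =Θ[atTop] fun n => (n : ℝ) ^ j * ‖μ‖ ^ n := by
  rw [← isTheta_norm_left]
  simp only [norm_mul, norm_pow, RCLike.norm_natCast]
  refine (isTheta_choose j).mul ?_
  have hpow : (fun n : ℕ => ‖μ‖ ^ n) =ᶠ[atTop] fun n => ‖μ‖ ^ j * ‖μ‖ ^ (n - j) :=
    (eventually_ge_atTop j).mono fun n hn => (pow_mul_pow_sub _ hn).symm
  exact ((isTheta_const_mul_right (pow_ne_zero j (norm_ne_zero_iff.mpr hμ))).mpr isTheta_rfl).trans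
    hpow.symm.isTheta

theorem isBigO_choose_mul_pow_sub (j : ℕ) (μ : 𝕜) :
    (fun n : ℕ => (n.choose j : 𝕜) * μ ^ (n - j)) =O[atTop] fun n => (n : ℝ) ^ j * ‖μ‖ ^ n := by
  rcases eq_or_ne μ 0 with rfl | hμ
  · refine (isBigO_zero _ _).congr' ((eventually_gt_atTop j).mono fun n hn => ?_) .rfl
    simp [zero_pow (Nat.sub_ne_zero_of_lt hn)]
  · exact (isTheta_choose_mul_pow_sub j hμ).isBigO

end Choose

section SMulConst

variable {α 𝕜 E : Type*} [NormedField 𝕜] [NormedAddCommGroup E] [NormedSpace 𝕜 E] {l : Filter α}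

theorem isBigO_smul_const (c : α → 𝕜) (y : E) : (fun a => c a • y) =O[l] c :=
  .of_bound ‖y‖ (.of_forall fun a => by rw [norm_smul, mul_comm])

theorem isTheta_smul_const (c : α → 𝕜) {y : E} (hy : y ≠ 0) : (fun a => c a • y) =Θ[l] c :=
  ⟨isBigO_smul_const c y, .of_bound ‖y‖⁻¹ (.of_forall fun a => by
    rw [norm_smul, mul_comm ‖c a‖, inv_mul_cancel_left₀ (norm_ne_zero_iff.mpr hy)])⟩

end SMulConst

theorem isBigO_of_forall_isBigO_apply {α 𝕜 E F : Type*} [NontriviallyNormedField 𝕜]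
    [CompleteSpace 𝕜] [NormedAddCommGroup E] [NormedSpace 𝕜 E] [FiniteDimensional 𝕜 E]
    [NormedAddCommGroup F] [NormedSpace 𝕜 F] {l : Filter α} {T : α → E →L[𝕜] F} {u : α → ℝ}
    (h : ∀ x, (fun a => T a x) =O[l] u) : T =O[l] u := by
  let b := Module.finBasis 𝕜 E
  obtain ⟨C, -, hC⟩ := b.exists_opNorm_le (F := F)
  obtain ⟨c, hc, hTb⟩ := (isBigO_pi.mpr fun i => h (b i)).exists_pos
  refine .of_bound (C * c) ?_
  filter_upwards [hTb.bound] with a ha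
  rw [mul_assoc]
  exact hC (by positivity) fun i => (norm_le_pi_norm (fun i => T a (b i)) i).trans ha

theorem isBigO_pow_of_forall_maxGenEigenspace {𝕜 E : Type*} [NontriviallyNormedField 𝕜]
    [CompleteSpace 𝕜] [IsAlgClosed 𝕜] [NormedAddCommGroup E] [NormedSpace 𝕜 E]
    [FiniteDimensional 𝕜 E] (φ : E →L[𝕜] E) {u : ℕ → ℝ}
    (h : ∀ μ, ∀ x ∈ End.maxGenEigenspace (φ : End 𝕜 E) μ,
      (fun n : ℕ => ((φ : End 𝕜 E) ^ n) x) =O[atTop] u) :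
    (fun n : ℕ => φ ^ n) =O[atTop] u := by
  refine isBigO_of_forall_isBigO_apply fun x => ?_
  have hx : x ∈ ⨆ μ, End.maxGenEigenspace (φ : End 𝕜 E) μ := by
    rw [End.iSup_maxGenEigenspace_eq_top]; trivial
  refine Submodule.iSup_induction _ (motive := fun x => (fun n : ℕ => (φ ^ n) x) =O[atTop] u) hx
    (fun μ x hx => ?_) ?_ fun x y hx hy => ?_
  · simpa only [← ContinuousLinearMap.toLinearMap_pow, ContinuousLinearMap.coe_coe] using h μ x hx
  · simpa using isBigO_zero u atTop
  · simpa using hx.add hy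

section Iterates

variable {𝕜 E : Type*} [RCLike 𝕜] [NormedAddCommGroup E] [NormedSpace 𝕜 E]

theorem isBigO_pow_apply_of_mem_ker (f : End 𝕜 E) {μ : 𝕜} {k : ℕ} {x : E}
    (hx : x ∈ LinearMap.ker ((f - μ • 1) ^ k)) {u : ℕ → ℝ}
    (hu : ∀ j < k, (fun n : ℕ => (n : ℝ) ^ j * ‖μ‖ ^ n) =O[atTop] u) :
    (fun n : ℕ => (f ^ n) x) =O[atTop] u := by
  simp_rw [pow_apply_eq_sum_of_mem_ker f μ hx]
  refine IsBigO.fun_sum fun j hj => ?_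
  exact (isBigO_smul_const _ _).trans
    ((isBigO_choose_mul_pow_sub j μ).trans (hu j (Finset.mem_range.mp hj)))

theorem isTheta_pow_apply_of_mem_ker_of_notMem (f : End 𝕜 E) {μ : 𝕜} (hμ : μ ≠ 0) {s : ℕ}
    {v : E} (hv : v ∈ LinearMap.ker ((f - μ • 1) ^ (s + 1)))
    (hvs : v ∉ LinearMap.ker ((f - μ • 1) ^ s)) :
    (fun n : ℕ => (f ^ n) v) =Θ[atTop] fun n => (n : ℝ) ^ s * ‖μ‖ ^ n := by
  set g := f - μ • 1
  have hexp : (fun n : ℕ => (f ^ n) v) =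
      (fun n : ℕ => ((n.choose s : 𝕜) * μ ^ (n - s)) • (g ^ s) v) +
      fun n : ℕ => ∑ j ∈ Finset.range s, ((n.choose j : 𝕜) * μ ^ (n - j)) • (g ^ j) v := by
    ext n
    rw [pow_apply_eq_sum_of_mem_ker f μ hv, Finset.sum_range_succ, add_comm, Pi.add_apply]
  rw [hexp]
  refine IsTheta.add_isLittleO ?_ ?_
  · exact (isTheta_smul_const _ hvs).trans (isTheta_choose_mul_pow_sub s hμ)
  · refine IsLittleO.fun_sum fun j hj => ?_
    exact (isBigO_smul_const _ _).trans_isLittleO <|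
      (isBigO_choose_mul_pow_sub j μ).trans_isLittleO <|
      (isLittleO_natCast_pow_pow (Finset.mem_range.mp hj)).mul_isBigO (isBigO_refl _ _)

variable [FiniteDimensional 𝕜 E]

theorem isBigO_pow_of_kerPowIndex_eq (φ : E →L[𝕜] E) {μ : 𝕜} (hμ : μ ≠ 0) {s : ℕ}
    (hs : kerPowIndex ((φ : End 𝕜 E) - μ • 1) = s + 1) :
    (fun n : ℕ => (n : ℝ) ^ s * ‖μ‖ ^ n) =O[atTop] fun n : ℕ => φ ^ n := by
  set g := (φ : End 𝕜 E) - μ • 1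
  have hne := ker_pow_kerPowIndex_ne (g := g) (by omega)
  rw [hs, Nat.add_sub_cancel] at hne
  obtain ⟨v, hv, hvs⟩ := SetLike.exists_of_lt <|
    (ker_pow_le_ker_pow_of_le g (Nat.le_succ s)).lt_of_ne hne.symm
  refine (isTheta_pow_apply_of_mem_ker_of_notMem _ hμ hv hvs).symm.isBigO.trans ?_
  refine .of_bound ‖v‖ (.of_forall fun n => ?_)
  rw [← ContinuousLinearMap.toLinearMap_pow, mul_comm]
  exact (φ ^ n).le_opNorm v

end Iterates

theorem isBigO_pow_of_forall_hasEigenvalue {E : Type*} [NormedAddCommGroup E] [NormedSpace ℂ E]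
    [FiniteDimensional ℂ E] (φ : E →L[ℂ] E) {r : ℝ} (s : ℕ)
    (hr : ∀ μ, End.HasEigenvalue (φ : End ℂ E) μ → ‖μ‖ ≤ r)
    (hs : ∀ μ, End.HasEigenvalue (φ : End ℂ E) μ → ‖μ‖ = r →
      kerPowIndex ((φ : End ℂ E) - μ • 1) ≤ s + 1) :
    (fun n : ℕ => φ ^ n) =O[atTop] fun n => (n : ℝ) ^ s * r ^ n := by
  refine isBigO_pow_of_forall_maxGenEigenspace φ fun μ x hx => ?_
  rcases eq_or_ne x 0 with rfl | hx0
  · simpa using isBigO_zero _ _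
  set g := (φ : End ℂ E) - μ • 1
  obtain ⟨k, hk⟩ := (End.mem_maxGenEigenspace _ μ x).mp hx
  have hμ := hasEigenvalue_of_mem_ker_pow (LinearMap.mem_ker.mpr hk) hx0
  rcases (hr μ hμ).lt_or_eq with hlt | heq
  · exact isBigO_pow_apply_of_mem_ker _ (LinearMap.mem_ker.mpr hk) fun j _ =>
      isBigO_natCast_pow_mul_pow_of_lt (by rwa [abs_norm]) j s
  · have hx' : x ∈ LinearMap.ker (g ^ (s + 1)) :=
      ker_pow_le_ker_pow_of_le g (hs μ hμ heq) (ker_pow_le_ker_pow_kerPowIndex g k hk)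
    exact isBigO_pow_apply_of_mem_ker _ hx' fun j hj =>
      heq ▸ (isBigO_natCast_pow_pow (Nat.le_of_lt_succ hj)).mul (isBigO_refl _ _)

theorem exists_bounds_of_isTheta {α : Type*} [Nonempty α] [SemilatticeSup α] {a b : α → ℝ}
    (h : a =Θ[atTop] b) (ha : ∀ n, 0 ≤ a n) (hb : ∀ n, 0 ≤ b n) :
    ∃ (c C : ℝ) (N₀ : α), 0 < c ∧ c ≤ C ∧ ∀ n, N₀ ≤ n → c * b n ≤ a n ∧ a n ≤ C * b n := by
  obtain ⟨C, hC, hab⟩ := h.isBigO.exists_pos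
  obtain ⟨C', hC', hba⟩ := h.symm.isBigO.exists_pos
  obtain ⟨N₀, hN₀⟩ := eventually_atTop.mp (hab.bound.and hba.bound)
  refine ⟨C'⁻¹, max C C'⁻¹, N₀, inv_pos.mpr hC', le_max_right _ _, fun n hn => ?_⟩
  obtain ⟨hle, hge⟩ := hN₀ n hn
  simp only [Real.norm_of_nonneg (ha n), Real.norm_of_nonneg (hb n)] at hle hge
  constructor
  · rw [inv_mul_le_iff₀ hC']
    exact hge
  · exact hle.trans (mul_le_mul_of_nonneg_right (le_max_left _ _) (hb n))

theorem norm_growth_of_iterates_equiv_pow_general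
    {V : Type*} [NormedAddCommGroup V] [NormedSpace ℂ V]
    [FiniteDimensional ℂ V] (φ : V →L[ℂ] V) (r : ℝ)
    (hr : IsGreatest {x : ℝ | ∃ lam : ℂ,
      Module.End.HasEigenvalue (φ.toLinearMap : Module.End ℂ V) lam ∧ x = ‖lam‖} r)
    (hrpos : 0 < r) (s : ℕ)
    (hs : s + 1 = sSup {m : ℕ | ∃ lam : ℂ,
        Module.End.HasEigenvalue (φ.toLinearMap : Module.End ℂ V) lam ∧ ‖lam‖ = r ∧
        m = sSup {k : ℕ |
          LinearMap.ker (((φ.toLinearMap : Module.End ℂ V) - lam • 1) ^ k) ≠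
          LinearMap.ker (((φ.toLinearMap : Module.End ℂ V) - lam • 1) ^ (k - 1))}}) :
    ∃ (c C : ℝ) (N₀ : ℕ), 0 < c ∧ c ≤ C ∧
      ∀ n : ℕ, N₀ ≤ n →
        c * (n : ℝ) ^ s ≤ ‖φ ^ n‖ / r ^ n ∧ ‖φ ^ n‖ / r ^ n ≤ C * (n : ℝ) ^ s := by
  set f : End ℂ V := φ.toLinearMap
  set T := {m : ℕ | ∃ lam : ℂ, f.HasEigenvalue lam ∧ ‖lam‖ = r ∧ m = kerPowIndex (f - lam • 1)}
  change s + 1 = sSup T at hs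
  have hT : BddAbove T := ⟨finrank ℂ V, by rintro _ ⟨μ, -, -, rfl⟩; exact kerPowIndex_le_finrank _⟩
  obtain ⟨μ₀, -, hμ₀, hμ₀s⟩ : s + 1 ∈ T := by
    obtain ⟨μ, hμ, hμr⟩ := hr.1
    exact hs ▸ Nat.sSup_mem ⟨_, μ, hμ, hμr.symm, rfl⟩ hT
  have upper : (fun n : ℕ => φ ^ n) =O[atTop] fun n => (n : ℝ) ^ s * r ^ n :=
    isBigO_pow_of_forall_hasEigenvalue φ s (fun μ hμ => hr.2 ⟨μ, hμ, rfl⟩)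
      fun μ hμ hμr => hs ▸ le_csSup hT ⟨μ, hμ, hμr, rfl⟩
  have lower : (fun n : ℕ => (n : ℝ) ^ s * r ^ n) =O[atTop] fun n => φ ^ n :=
    hμ₀ ▸ isBigO_pow_of_kerPowIndex_eq φ (norm_pos_iff.mp (hμ₀ ▸ hrpos)) hμ₀s.symm
  have hΘ : (fun n : ℕ => ‖φ ^ n‖ / r ^ n) =Θ[atTop] fun n => (n : ℝ) ^ s := by
    have := (isTheta_norm_left.mpr ⟨upper, lower⟩).div (isTheta_refl (fun n : ℕ => r ^ n) atTop)
    simpa [mul_div_cancel_right₀ _ (pow_ne_zero _ hrpos.ne')] using this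
  exact exists_bounds_of_isTheta hΘ (fun n => by positivity) fun n => by positivity

/-- Let `φ` be an endomorphism of a nonzero finite-dimensional complex
normed vector space with spectral radius `r = ρ(φ) > 0` (the maximal modulus of an
eigenvalue), and let `s + 1` be the maximal size of the Jordan blocks of `φ` whose
eigenvalue `λ` has `|λ| = ρ(φ)` (expressed via kernels of powers of `φ - λ·id`).
Then `‖φⁿ‖ / ρ(φ)ⁿ` grows like `nˢ`: there are constants `0 < c ≤ C` and `N₀` with
`c·nˢ ≤ ‖φⁿ‖/ρ(φ)ⁿ ≤ C·nˢ` for all `n ≥ N₀`. -/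
theorem norm_growth_of_iterates_equiv_pow
    {V : Type*} [NormedAddCommGroup V] [NormedSpace ℂ V]
    [FiniteDimensional ℂ V] [Nontrivial V] (φ : V →L[ℂ] V) (r : ℝ)
    (hr : IsGreatest {x : ℝ | ∃ lam : ℂ,
      Module.End.HasEigenvalue (φ.toLinearMap : Module.End ℂ V) lam ∧ x = ‖lam‖} r)
    (hrpos : 0 < r) (s : ℕ)
    (hs : s + 1 = sSup {m : ℕ | ∃ lam : ℂ,
        Module.End.HasEigenvalue (φ.toLinearMap : Module.End ℂ V) lam ∧ ‖lam‖ = r ∧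
        m = sSup {k : ℕ |
          LinearMap.ker (((φ.toLinearMap : Module.End ℂ V) - lam • 1) ^ k) ≠
          LinearMap.ker (((φ.toLinearMap : Module.End ℂ V) - lam • 1) ^ (k - 1))}}) :
    ∃ (c C : ℝ) (N₀ : ℕ), 0 < c ∧ c ≤ C ∧
      ∀ n : ℕ, N₀ ≤ n →
        c * (n : ℝ) ^ s ≤ ‖φ ^ n‖ / r ^ n ∧ ‖φ ^ n‖ / r ^ n ≤ C * (n : ℝ) ^ s :=
  norm_growth_of_iterates_equiv_pow_general φ r hr hrpos s hs
end

section
/- Let k be a field and let D be a k-linear, Hom-finite, Ext-bounded triangulated category. Let d ≥ 1 be an integer, T a triangulated endofunctor of D, and G, G′, A objects of D such that for every n ≥ 1 there is a distinguished triangle A[(1−d)(n−1)] → T^{n−1}(G) → Tⁿ(G) → A[(1−d)(n−1)+1] (as holds for the spherical twist T = T_E along a d-spherical object E, with A = RHom(E,G)⊗E). Set A_t = ε_t(G′, A) and B_t = ε_t(G′, G). Then for every n ≥ 1 and every t ∈ ℝ: ε_t(G′, Tⁿ(G)) ≤ n·e^t·A_t + B_t if d = 1; ε_0(G′, Tⁿ(G))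 ≤ n·A_0 + B_0; ε_t(G′, Tⁿ(G)) ≤ (e^{(1−d)nt}/(e^{(1−d)t} − 1))·A_t + B_t if t < 0 and d ≥ 2; and ε_t(G′, Tⁿ(G)) ≤ (e^t/(1 − e^{(1−d)t}))·A_t + B_t if t > 0 and d ≥ 2. -/
open CategoryTheory Category Limits Pretriangulated Filter Topology
open scoped ENNReal

universe v u

namespace CatDyn

variable {D : Type u} [Category.{v} D] [Limits.HasZeroObject D] [Preadditive D]
  [HasShift D ℤ] [∀ n : ℤ, (CategoryTheory.shiftFunctor D n).Additive] [Pretriangulated D]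
  [HasBinaryBiproducts D]

/-- A tower `0 = A₀ → A₁ → ⋯ → A_m ≅ N ⊕ N'` with cones shifts of `M`,
computing the complexity of `N` with respect to `M`. -/
structure Tower (M N : D) where
  m : ℕ
  A : Fin (m + 1) → D
  f : ∀ i : Fin m, A i.castSucc ⟶ A i.succ
  shifts : Fin m → ℤ
  N' : D
  isZero_zero : IsZero (A 0)
  lastIso : A (Fin.last m) ≅ N ⊞ N'
  dist : ∀ i : Fin m, ∃ (g : A i.succ ⟶ M⟦shifts i⟧) (h : M⟦shifts i⟧ ⟶ (A i.castSucc)⟦(1 : ℤ)⟧),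
    Triangle.mk (f i) g h ∈ distTriang D

/-- The value `Σ_k e^{n_k t}` of a tower. -/
noncomputable def Tower.value {M N : D} (t : ℝ) (T : Tower M N) : ℝ≥0∞ :=
  ∑ i : Fin T.m, ENNReal.ofReal (Real.exp (T.shifts i * t))

/-- The complexity function `δ_t(M,N)`, valued in `[0,∞]`; it is `∞` iff no tower exists,
i.e. iff `N` is not in the thick triangulated subcategory generated by `M`. -/
noncomputable def complexity (t : ℝ) (M N : D) : ℝ≥0∞ :=
  ⨅ T : Tower M N, T.value t

/-- `G` is a split generator: every object admits a tower over `G`, i.e. the thick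
triangulated subcategory generated by `G` is all of `D`. -/
def IsSplitGenerator (G : D) : Prop := ∀ N : D, Nonempty (Tower G N)

/-- The `n`-th iterate of an endofunctor. -/
def fpow (F : D ⥤ D) : ℕ → D ⥤ D
  | 0 => 𝟭 D
  | n + 1 => fpow F n ⋙ F

/-- `F` is not virtually zero: no positive iterate is the zero functor. -/
def NotVirtuallyZero (F : D ⥤ D) : Prop := ∀ n : ℕ, 0 < n → ¬ IsZero (fpow F n)

/-- The categorical entropy `h_t(F) ∈ [-∞,∞)`, computed with split generator `G`
(the limit exists and is independent of the generator). -/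
noncomputable def entropy (t : ℝ) (F : D ⥤ D) (G : D) : EReal :=
  limsup (fun n : ℕ =>
    ENNReal.log (complexity t G ((fpow F n).obj G)) * (((n : ℝ)⁻¹ : ℝ) : EReal)) atTop

/-- The categorical polynomial entropy
`h^pol_t(F) = limsup (log δ_t(G, Fⁿ G) - n h_t(F)) / log n`. -/
noncomputable def polyEntropy (t : ℝ) (F : D ⥤ D) (G : D) : EReal :=
  limsup (fun n : ℕ =>
    (ENNReal.log (complexity t G ((fpow F n).obj G)) - ((n : ℝ) : EReal) * entropy t F G)
      * ((((Real.log n)⁻¹ : ℝ)) : EReal)) atTop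

/-- The lower categorical polynomial entropy (with `liminf` instead of `limsup`). -/
noncomputable def polyEntropyLow (t : ℝ) (F : D ⥤ D) (G : D) : EReal :=
  liminf (fun n : ℕ =>
    (ENNReal.log (complexity t G ((fpow F n).obj G)) - ((n : ℝ) : EReal) * entropy t F G)
      * ((((Real.log n)⁻¹ : ℝ)) : EReal)) atTop

section Linear

variable (𝕜 : Type*) [Field 𝕜] [Linear 𝕜 D]

/-- The Ext-distance `ε_t(M,N) = Σ_{k∈ℤ} dim Hom(M, N[k]) e^{-kt}`. -/
noncomputable def extDist (t : ℝ) (M N : D) : ℝ≥0∞ :=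
  ∑' k : ℤ, (Module.finrank 𝕜 (M ⟶ N⟦k⟧) : ℝ≥0∞) * ENNReal.ofReal (Real.exp (-k * t))

variable (D) in
/-- `D` is Hom-finite over `𝕜`. -/
def HomFinite : Prop := ∀ X Y : D, FiniteDimensional 𝕜 (X ⟶ Y)

variable (D) in
/-- `D` is Ext-bounded: `Hom(X, Y[k]) = 0` for all but finitely many `k`. -/
def ExtBounded : Prop := ∀ X Y : D, {k : ℤ | ∃ f : X ⟶ Y⟦k⟧, f ≠ 0}.Finite

variable (D) in
/-- The comparability property: `δ_t` and `ε_t` control each other, uniformly in the objects. -/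
def Comparability : Prop :=
  ∃ C₁ C₂ : ℝ → ℝ, (∀ t, 0 < C₁ t ∧ 0 < C₂ t) ∧
    ∀ (t : ℝ) (M N : D),
      ENNReal.ofReal (C₁ t) * extDist 𝕜 t M N ≤ complexity t M N ∧
      complexity t M N ≤ ENNReal.ofReal (C₂ t) * extDist 𝕜 t M N

end Linear



end CatDyn

/-! Rotating the triangle `A[(1-d)n] → TⁿG → Tⁿ⁺¹G → A[(1-d)n][1]` and using subadditivity of
`ε_t(G', -)` together with `ε_t(M, N[s]) = e^{st} ε_t(M, N)` gives
`ε_t(G', Tⁿ⁺¹G) ≤ ε_t(G', TⁿG) + e^{((1-d)n+1)t} A_t`. Hence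
`ε_t(G', TⁿG) ≤ (Σ_{j<n} e^{((1-d)j+1)t}) A_t + B_t`, and the four bounds evaluate or estimate
this geometric sum, whose ratio `e^{(1-d)t}` is `1` when `d = 1` or `t = 0` and is otherwise
above or below `1` according to the sign of `t`. -/

open Finset Module

theorem LinearMap.finrank_le_finrank_add_finrank_of_ker_le_range {K U V W : Type*} [DivisionRing K]
    [AddCommGroup U] [Module K U] [AddCommGroup V] [Module K V] [AddCommGroup W] [Module K W]
    [FiniteDimensional K U] [FiniteDimensional K V] [FiniteDimensional K W]
    (φ : U →ₗ[K] V) (ψ : V →ₗ[K] W) (h : ker ψ ≤ range φ) :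
    finrank K V ≤ finrank K U + finrank K W := by
  have hker : finrank K (ker ψ) ≤ finrank K U :=
    (Submodule.finrank_mono h).trans φ.finrank_range_le
  have hrange : finrank K (range ψ) ≤ finrank K W := (range ψ).finrank_le
  have := ψ.finrank_range_add_finrank_ker
  omega

theorem exp_affine_mul_eq_mul_pow (a t : ℝ) (j : ℕ) :
    Real.exp ((a * j + 1) * t) = Real.exp t * Real.exp (a * t) ^ j := by
  rw [← Real.exp_nat_mul, ← Real.exp_add]
  ring_nf

theorem sum_exp_affine_le_of_nonpos {a t : ℝ} (hat : 0 < a * t) (ht : t ≤ 0) (n : ℕ) :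
    ∑ j ∈ range n, Real.exp ((a * j + 1) * t) ≤ Real.exp (a * n * t) / (Real.exp (a * t) - 1) := by
  have hr : 1 < Real.exp (a * t) := Real.one_lt_exp_iff.mpr hat
  have hgeom : ∑ j ∈ range n, Real.exp (a * t) ^ j ≤ Real.exp (a * t) ^ n / (Real.exp (a * t) - 1) := by
    rw [geom_sum_eq hr.ne']
    exact div_le_div_of_nonneg_right (by linarith) (by linarith)
  calc ∑ j ∈ range n, Real.exp ((a * j + 1) * t)
      = Real.exp t * ∑ j ∈ range n, Real.exp (a * t) ^ j := by
        simp only [exp_affine_mul_eq_mul_pow, mul_sum]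
    _ ≤ ∑ j ∈ range n, Real.exp (a * t) ^ j :=
        mul_le_of_le_one_left (by positivity) (Real.exp_le_one_iff.mpr ht)
    _ ≤ Real.exp (a * n * t) / (Real.exp (a * t) - 1) := by
        rwa [show a * n * t = n * (a * t) by ring, Real.exp_nat_mul]

theorem sum_exp_affine_le_of_mul_neg {a t : ℝ} (hat : a * t < 0) (n : ℕ) :
    ∑ j ∈ range n, Real.exp ((a * j + 1) * t) ≤ Real.exp t / (1 - Real.exp (a * t)) := by
  have hr : Real.exp (a * t) < 1 := Real.exp_lt_one_iff.mpr hat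
  calc ∑ j ∈ range n, Real.exp ((a * j + 1) * t)
      = Real.exp t * ∑ j ∈ range n, Real.exp (a * t) ^ j := by
        simp only [exp_affine_mul_eq_mul_pow, mul_sum]
    _ ≤ Real.exp t * (1 - Real.exp (a * t))⁻¹ := by
        rw [range_eq_Ico, ← one_div]
        gcongr
        simpa using geom_sum_Ico_le_of_lt_one (Real.exp_nonneg (a * t)) hr (m := 0) (n := n)
    _ = Real.exp t / (1 - Real.exp (a * t)) := rfl

namespace CatDyn

section

variable {D : Type*} [Category D] [Preadditive D] [HasShift D ℤ] {𝕜 : Type*} [Field 𝕜]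
  [Linear 𝕜 D]

theorem extDist_shift (t : ℝ) (M N : D) (s : ℤ) :
    extDist 𝕜 t M (N⟦s⟧) = ENNReal.ofReal (Real.exp (s * t)) * extDist 𝕜 t M N := by
  have hterm (j : ℤ) :
      (finrank 𝕜 (M ⟶ N⟦s⟧⟦j - s⟧) : ℝ≥0∞) * ENNReal.ofReal (Real.exp (-↑(j - s) * t)) =
        ENNReal.ofReal (Real.exp (s * t)) *
          ((finrank 𝕜 (M ⟶ N⟦j⟧) : ℝ≥0∞) * ENNReal.ofReal (Real.exp (-j * t))) := by
    have e : N⟦s⟧⟦j - s⟧ ≅ N⟦j⟧ := ((shiftFunctorAdd' D s (j - s) j (by ring)).app N).symm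
    rw [(Linear.homCongr 𝕜 (Iso.refl M) e).finrank_eq, mul_left_comm,
      ← ENNReal.ofReal_mul (Real.exp_nonneg _), ← Real.exp_add]
    push_cast
    ring_nf
  rw [extDist, extDist, ← ENNReal.tsum_mul_left, ← (Equiv.subRight s).tsum_eq]
  exact tsum_congr hterm

variable [HasZeroObject D] [∀ n : ℤ, (shiftFunctor D n).Additive] [Pretriangulated D]

theorem finrank_hom_obj₂_le (hfin : HomFinite D 𝕜) (M : D) {Tr : Triangle D}
    (hTr : Tr ∈ distTriang D) :
    finrank 𝕜 (M ⟶ Tr.obj₂) ≤ finrank 𝕜 (M ⟶ Tr.obj₁) + finrank 𝕜 (M ⟶ Tr.obj₃) := by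
  have := hfin M Tr.obj₁
  have := hfin M Tr.obj₂
  have := hfin M Tr.obj₃
  refine LinearMap.finrank_le_finrank_add_finrank_of_ker_le_range
    (Linear.rightComp 𝕜 M Tr.mor₁) (Linear.rightComp 𝕜 M Tr.mor₂) fun f hf => ?_
  obtain ⟨g, rfl⟩ := Triangle.coyoneda_exact₂ Tr hTr f hf
  exact ⟨g, rfl⟩

theorem extDist_obj₂_le (hfin : HomFinite D 𝕜) (t : ℝ) (M : D) {Tr : Triangle D}
    (hTr : Tr ∈ distTriang D) :
    extDist 𝕜 t M Tr.obj₂ ≤ extDist 𝕜 t M Tr.obj₁ + extDist 𝕜 t M Tr.obj₃ := by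
  rw [extDist, extDist, extDist, ← ENNReal.tsum_add]
  refine ENNReal.tsum_le_tsum fun k => ?_
  rw [← add_mul]
  gcongr
  exact_mod_cast finrank_hom_obj₂_le hfin M (Triangle.shift_distinguished Tr hTr k)

theorem extDist_le_sum_add_of_distTriang (hfin : HomFinite D 𝕜) (t : ℝ) (M : D) (X Y : ℕ → D)
    (htri : ∀ n, ∃ (f : Y n ⟶ X n) (g : X n ⟶ X (n + 1)) (h : X (n + 1) ⟶ (Y n)⟦(1 : ℤ)⟧),
      Triangle.mk f g h ∈ distTriang D) (n : ℕ) :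
    extDist 𝕜 t M (X n) ≤ ∑ j ∈ range n, extDist 𝕜 t M ((Y j)⟦(1 : ℤ)⟧) + extDist 𝕜 t M (X 0) := by
  induction n with
  | zero => simp
  | succ n ih =>
    obtain ⟨f, g, h, hT⟩ := htri n
    calc extDist 𝕜 t M (X (n + 1))
        ≤ extDist 𝕜 t M (X n) + extDist 𝕜 t M ((Y n)⟦(1 : ℤ)⟧) :=
          extDist_obj₂_le hfin t M (Tr := (Triangle.mk f g h).rotate) (rot_of_distTriang _ hT)
      _ ≤ _ := by
          rw [sum_range_succ, add_right_comm]
          gcongr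

theorem extDist_le_of_distTriang_shift (hfin : HomFinite D 𝕜) (t : ℝ) (M A : D) (X : ℕ → D)
    (s : ℕ → ℤ)
    (htri : ∀ n, ∃ (f : A⟦s n⟧ ⟶ X n) (g : X n ⟶ X (n + 1)) (h : X (n + 1) ⟶ A⟦s n⟧⟦(1 : ℤ)⟧),
      Triangle.mk f g h ∈ distTriang D) (n : ℕ) :
    extDist 𝕜 t M (X n) ≤
      ENNReal.ofReal (∑ j ∈ range n, Real.exp ((s j + 1) * t)) * extDist 𝕜 t M A +
        extDist 𝕜 t M (X 0) := by
  have hshift (j : ℕ) : extDist 𝕜 t M (A⟦s j⟧⟦(1 : ℤ)⟧) =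
      ENNReal.ofReal (Real.exp ((s j + 1) * t)) * extDist 𝕜 t M A := by
    rw [extDist_shift, extDist_shift, ← mul_assoc, ← ENNReal.ofReal_mul (Real.exp_nonneg _),
      ← Real.exp_add]
    push_cast
    ring_nf
  refine (extDist_le_sum_add_of_distTriang hfin t M X _ htri n).trans_eq ?_
  rw [ENNReal.ofReal_sum_of_nonneg fun j _ => (Real.exp_nonneg _), sum_mul]
  simp only [hshift]

end

/-- Upper bound for iterates of (an abstraction of) a spherical twist:
if for every `n` there is a distinguished triangle
`A[(1-d)n] → Tⁿ(G) → T^{n+1}(G) → A[(1-d)n][1]`, then, with `A_t = ε_t(G', A)` and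
`B_t = ε_t(G', G)`, one has for all `n ≥ 1` the stated bounds on `ε_t(G', Tⁿ(G))`
according to the sign of `t` and the value of `d`. -/
theorem statement_11 {D : Type u} [Category.{v} D] [HasZeroObject D] [Preadditive D]
    [HasShift D ℤ] [∀ n : ℤ, (CategoryTheory.shiftFunctor D n).Additive] [Pretriangulated D]
    [HasBinaryBiproducts D] (𝕜 : Type*) [Field 𝕜] [Linear 𝕜 D]
    (hfin : HomFinite D 𝕜) (hbdd : ExtBounded D)
    (d : ℕ) (hd : 1 ≤ d) (T : D ⥤ D) [T.CommShift ℤ] [T.IsTriangulated]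
    (G G' A : D)
    (htri : ∀ n : ℕ, ∃ (f : (A⟦(1 - (d : ℤ)) * n⟧) ⟶ (fpow T n).obj G)
      (g : (fpow T n).obj G ⟶ (fpow T (n + 1)).obj G)
      (h : (fpow T (n + 1)).obj G ⟶ (A⟦(1 - (d : ℤ)) * n⟧)⟦(1 : ℤ)⟧),
      Triangle.mk f g h ∈ distTriang D) :
    ∀ n : ℕ, 1 ≤ n →
      (d = 1 → ∀ t : ℝ,
        extDist 𝕜 t G' ((fpow T n).obj G) ≤
          (n : ℝ≥0∞) * ENNReal.ofReal (Real.exp t) * extDist 𝕜 t G' A + extDist 𝕜 t G' G) ∧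
      (extDist 𝕜 0 G' ((fpow T n).obj G) ≤
        (n : ℝ≥0∞) * extDist 𝕜 0 G' A + extDist 𝕜 0 G' G) ∧
      (2 ≤ d → ∀ t : ℝ, t < 0 →
        extDist 𝕜 t G' ((fpow T n).obj G) ≤
          ENNReal.ofReal (Real.exp ((1 - (d : ℝ)) * n * t) / (Real.exp ((1 - (d : ℝ)) * t) - 1))
            * extDist 𝕜 t G' A + extDist 𝕜 t G' G) ∧
      (2 ≤ d → ∀ t : ℝ, 0 < t →
        extDist 𝕜 t G' ((fpow T n).obj G) ≤
          ENNReal.ofReal (Real.exp t / (1 - Real.exp ((1 - (d : ℝ)) * t)))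
            * extDist 𝕜 t G' A + extDist 𝕜 t G' G) := by
  intro n _
  have key (t : ℝ) : extDist 𝕜 t G' ((fpow T n).obj G) ≤
      ENNReal.ofReal (∑ j ∈ range n, Real.exp (((1 - d) * j + 1) * t)) * extDist 𝕜 t G' A +
        extDist 𝕜 t G' G := by
    have := extDist_le_of_distTriang_shift hfin t G' A (fun n => (fpow T n).obj G)
      (fun n => (1 - d) * n) htri n
    push_cast at this
    exact this
  refine ⟨fun hd1 t => (key t).trans_eq ?_, (key 0).trans_eq ?_, fun hd2 t ht => (key t).trans ?_,
    fun hd2 t ht => (key t).trans ?_⟩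
  · simp [hd1, ENNReal.ofReal_mul]
  · simp
  · have hat : 0 < (1 - (d : ℝ)) * t :=
      mul_pos_of_neg_of_neg (by linarith [show (2 : ℝ) ≤ d by exact_mod_cast hd2]) ht
    gcongr
    exact sum_exp_affine_le_of_nonpos hat ht.le n
  · have hat : (1 - (d : ℝ)) * t < 0 :=
      mul_neg_of_neg_of_pos (by linarith [show (2 : ℝ) ≤ d by exact_mod_cast hd2]) ht
    gcongr
    exact sum_exp_affine_le_of_mul_neg hat n

end CatDyn
end
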